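/- arXiv:1807.03614 — 2 statements merged into one kernel-verified Lean document; each statement's English description precedes it below -/
import Mathlib

section
/- Let d ≥ 2, let C, D ∈ C^d_* be closed convex cones of positive dimension, and let x ∈ ℝ^d. Suppose there exists ε > 0 such that δ_a(C,D) ≤ π/2 − ε, d_a(x,C) ≤ π/2 − ε, and d_a(x,D) ≤ π/2 − ε. Then cos d_a(Π_C(x), Π_D(x)) ≥ 1 − c_ε · δ_a(C,D), where c_ε = 2(π^{−1} + tan(π/2 − ε)). -/
open Set MeasureTheory
open scoped RealInnerProductSpace ENNReal NNReal

attribute [local instance] Classical.propDecidable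

noncomputable section

/-- `ℝ^d` with its Euclidean structure. -/
abbrev Euc (d : ℕ) := EuclideanSpace ℝ (Fin d)

/-- A closed convex cone (with apex `o`) in `ℝ^d`. -/
def IsClosedConvexCone {d : ℕ} (C : Set (Euc d)) : Prop :=
  C.Nonempty ∧ IsClosed C ∧ Convex ℝ C ∧ ∀ x ∈ C, ∀ r : ℝ, 0 ≤ r → r • x ∈ C

/-- A cone has positive dimension iff it contains a nonzero point. -/
def PosDim {d : ℕ} (C : Set (Euc d)) : Prop := ∃ x ∈ C, x ≠ 0

/-- The dual (polar) cone `C° = {x : ⟪x,y⟫ ≤ 0 ∀ y ∈ C}`. -/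
def dualCone {d : ℕ} (C : Set (Euc d)) : Set (Euc d) :=
  {x | ∀ y ∈ C, ⟪x, y⟫ ≤ 0}

/-- The metric projection (nearest point map) onto a set; junk value `0` if
no nearest point exists.  For a nonempty closed convex set this is the usual
(unique) nearest-point map. -/
def metricProj {d : ℕ} (C : Set (Euc d)) (x : Euc d) : Euc d :=
  if h : ∃ y ∈ C, ∀ z ∈ C, dist x y ≤ dist x z then h.choose else 0

/-- The angular distance `d_a(x, C) = arccos (‖Π_C x‖ / ‖x‖)` for `x ≠ o`,
and `d_a(o, C) = π/2`. -/
def angDist {d : ℕ} (C : Set (Euc d)) (x : Euc d) : ℝ :=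
  if x = 0 then Real.pi / 2 else Real.arccos (‖metricProj C x‖ / ‖x‖)

/-- The angular parallel set `C_λ^a = {x : d_a(x,C) ≤ λ}`. -/
def angParallel {d : ℕ} (C : Set (Euc d)) (l : ℝ) : Set (Euc d) :=
  {x | angDist C x ≤ l}

/-- The angular Hausdorff distance
`δ_a(C,D) = min {λ ≥ 0 : C ⊆ D_λ^a, D ⊆ C_λ^a}`. -/
def angHaus {d : ℕ} (C D : Set (Euc d)) : ℝ :=
  sInf {l : ℝ | 0 ≤ l ∧ C ⊆ angParallel D l ∧ D ⊆ angParallel C l}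

/-- The standard Gaussian measure `γ_d` on `ℝ^d`. -/
def stdGaussian (d : ℕ) : Measure (Euc d) :=
  volume.withDensity fun x =>
    ENNReal.ofReal ((2 * Real.pi) ^ (-(d : ℝ) / 2) * Real.exp (-‖x‖ ^ 2 / 2))

/-- The biconic σ-algebra on `ℝ^d × ℝ^d`: Borel sets invariant under
separate positive scaling of the two components. -/
def biconicMS (d : ℕ) : MeasurableSpace (Euc d × Euc d) where
  MeasurableSet' η := MeasurableSet η ∧
    ∀ p ∈ η, ∀ a b : ℝ, 0 < a → 0 < b → (a • p.1, b • p.2) ∈ η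
  measurableSet_empty := ⟨MeasurableSet.empty, fun p hp => absurd hp (notMem_empty p)⟩
  measurableSet_compl := by
    rintro η ⟨hm, hinv⟩
    refine ⟨hm.compl, ?_⟩
    rintro p hp a b ha hb hmem
    apply hp
    have h2 := hinv _ hmem a⁻¹ b⁻¹ (by positivity) (by positivity)
    simpa [smul_smul, inv_mul_cancel₀ ha.ne', inv_mul_cancel₀ hb.ne'] using h2
  measurableSet_iUnion := by
    rintro s hs
    refine ⟨MeasurableSet.iUnion fun i => (hs i).1, ?_⟩
    rintro p hp a b ha hb
    obtain ⟨i, hi⟩ := mem_iUnion.1 hp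
    exact mem_iUnion.2 ⟨i, (hs i).2 p hi a b ha hb⟩

/-- A polyhedral cone: a finite intersection of closed halfspaces with `o`
on their boundary. -/
def IsPolyhedralCone {d : ℕ} (C : Set (Euc d)) : Prop :=
  ∃ (n : ℕ) (u : Fin n → Euc d), C = {x | ∀ i, ⟪x, u i⟫ ≤ 0}

/-- A face of a cone `C`: either `C` itself or the intersection of `C` with a
supporting hyperplane of `C` through `o`. -/
def IsFaceOf {d : ℕ} (C F : Set (Euc d)) : Prop :=
  F = C ∨ ∃ u : Euc d, u ≠ 0 ∧ (∀ x ∈ C, ⟪u, x⟫ ≤ 0) ∧ F = C ∩ {x | ⟪u, x⟫ = 0}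

/-- Relative interior of a set containing `o` (relative to its linear span). -/
def relint {d : ℕ} (S : Set (Euc d)) : Set (Euc d) :=
  {x ∈ S | ∃ ε > 0, ∀ y ∈ (Submodule.span ℝ S : Set (Euc d)), dist y x < ε → y ∈ S}

/-- The `k`-skeleton of a polyhedral cone: the union of the relative interiors
of its `k`-dimensional faces. -/
def skel {d : ℕ} (C : Set (Euc d)) (k : ℕ) : Set (Euc d) :=
  ⋃ F ∈ {F | IsFaceOf C F ∧ Module.finrank ℝ (Submodule.span ℝ F) = k}, relint F

/-- The conic support measure
`Ω_k(C,η) = P{Π_C(g) ∈ skel_k C, (Π_C(g), Π_{C°}(g)) ∈ η}`. -/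
def conicSuppMeasure {d : ℕ} (C : Set (Euc d)) (k : ℕ) (η : Set (Euc d × Euc d)) : ℝ≥0∞ :=
  stdGaussian d {x | metricProj C x ∈ skel C k ∧
    (metricProj C x, metricProj (dualCone C) x) ∈ η}

/-- `φ_f(C,η) = E [f(‖Π_C g‖², ‖Π_{C°} g‖²) · 1_η (Π_C g, Π_{C°} g)]` for a
standard Gaussian vector `g`. -/
def phiF {d : ℕ} (C : Set (Euc d)) (f : ℝ → ℝ → ℝ) (η : Set (Euc d × Euc d)) : ℝ≥0∞ :=
  ∫⁻ x, ENNReal.ofReal (f (‖metricProj C x‖ ^ 2) (‖metricProj (dualCone C) x‖ ^ 2)) *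
      η.indicator (fun _ => (1 : ℝ≥0∞)) (metricProj C x, metricProj (dualCone C) x)
    ∂ stdGaussian d

/-- `ω_j = 2 π^{j/2} / Γ(j/2)`, the total spherical Lebesgue measure of `S^{j-1}`. -/
def sphVol (j : ℕ) : ℝ := 2 * Real.pi ^ ((j : ℝ) / 2) / Real.Gamma ((j : ℝ) / 2)

/-- The coefficient functions `g_k` of the conic Steiner formula:
`g_k(λ) = (ω_k ω_{d-k} / ω_d) ∫_0^λ cos^{k-1} φ sin^{d-k-1} φ dφ` for
`1 ≤ k ≤ d-1`, and `g_d ≡ 1`. -/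
def gcoef (d k : ℕ) (l : ℝ) : ℝ :=
  if k = d then 1
  else (sphVol k * sphVol (d - k) / sphVol d) *
    ∫ t in (0:ℝ)..l, Real.cos t ^ (k - 1) * Real.sin t ^ (d - k - 1)

/-- The angular local parallel set
`M_λ^a(C,η) = {x : d_a(x,C) ≤ λ, (Π_C x, Π_{C°} x) ∈ η}`. -/
def angLocParallel {d : ℕ} (C : Set (Euc d)) (l : ℝ) (η : Set (Euc d × Euc d)) : Set (Euc d) :=
  {x | angDist C x ≤ l ∧ (metricProj C x, metricProj (dualCone C) x) ∈ η}

/-- The homogeneous extension of a function on `S^{d-1} × S^{d-1}`: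
`f_h(x,y) = f(x/‖x‖, y/‖y‖)` for `x, y ≠ o`, and `0` otherwise. -/
def homExt {d : ℕ} (f : Metric.sphere (0 : Euc d) 1 × Metric.sphere (0 : Euc d) 1 → ℝ)
    (p : Euc d × Euc d) : ℝ :=
  if h : p.1 ≠ 0 ∧ p.2 ≠ 0 then
    f (⟨‖p.1‖⁻¹ • p.1, by
          rw [mem_sphere_zero_iff_norm, norm_smul, norm_inv, norm_norm]
          exact inv_mul_cancel₀ (norm_ne_zero_iff.mpr h.1)⟩,
       ⟨‖p.2‖⁻¹ • p.2, by
          rw [mem_sphere_zero_iff_norm, norm_smul, norm_inv, norm_norm]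
          exact inv_mul_cancel₀ (norm_ne_zero_iff.mpr h.2)⟩)
  else 0

/-- The angle between two vectors: `arccos ⟪x/‖x‖, y/‖y‖⟫` for `x, y ≠ o`,
with `d_a(o,o) = 0` and `d_a(x,o) = d_a(o,x) = π/2` for `x ≠ o`. -/
def vecAngle {d : ℕ} (x y : Euc d) : ℝ :=
  if x = 0 ∧ y = 0 then 0
  else if x = 0 ∨ y = 0 then Real.pi / 2
  else Real.arccos ⟪‖x‖⁻¹ • x, ‖y‖⁻¹ • y⟫

/-- Membership in the class `F_bL`: functions on `S^{d-1} × S^{d-1}` with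
Lipschitz constant `≤ 1` (w.r.t. the Euclidean norm on `ℝ^d × ℝ^d`) and
sup-norm `≤ 1`. -/
def memFbL {d : ℕ} (f : Metric.sphere (0 : Euc d) 1 × Metric.sphere (0 : Euc d) 1 → ℝ) : Prop :=
  (∀ a b, |f a - f b| ≤
    Real.sqrt (‖(a.1 : Euc d) - (b.1 : Euc d)‖ ^ 2 + ‖(a.2 : Euc d) - (b.2 : Euc d)‖ ^ 2)) ∧
  ∀ a, |f a| ≤ 1

/-! The projections `p = Π_C x` and `z = Π_D x` satisfy `⟪p, z⟫ = ‖p‖² - ⟪p, x - z⟫`, and since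
`x - z` is polar to `D`, the term `⟪p, x - z⟫` is at most `‖p - Π_D p‖ · ‖x - z‖`. Both factors
are controlled by angles: `‖p - Π_D p‖ = ‖p‖ sin d_a(p, D) ≤ ‖p‖ δ_a(C, D)` because `p ∈ C`, and
`‖x - z‖ = ‖z‖ tan d_a(x, D) ≤ ‖z‖ tan(π/2 - ε)`. Taking `‖z‖ ≤ ‖p‖` (the other case is
symmetric) gives `⟪p, z⟫ ≥ ‖p‖ ‖z‖ (1 - δ_a(C, D) tan(π/2 - ε))`, and `c_ε ≥ tan(π/2 - ε)`. -/

open InnerProductGeometry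

variable {d : ℕ}

theorem metricProj_mem_and_inner_sub_le_zero {C : Set (Euc d)} (hne : C.Nonempty)
    (hcl : IsClosed C) (hcv : Convex ℝ C) (x : Euc d) :
    metricProj C x ∈ C ∧ ∀ w ∈ C, ⟪x - metricProj C x, w - metricProj C x⟫ ≤ 0 := by
  obtain ⟨v, hvC, hv⟩ := exists_norm_eq_iInf_of_complete_convex hne hcl.isComplete hcv x
  have hbdd : BddBelow (range fun w : C => ‖x - (w : Euc d)‖) :=
    ⟨0, by rintro r ⟨w, rfl⟩; exact norm_nonneg _⟩
  have hex : ∃ y ∈ C, ∀ z ∈ C, dist x y ≤ dist x z := by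
    refine ⟨v, hvC, fun z hz => ?_⟩
    rw [dist_eq_norm, dist_eq_norm, hv]
    exact ciInf_le hbdd ⟨z, hz⟩
  rw [metricProj, dif_pos hex]
  obtain ⟨hy, hmin⟩ := hex.choose_spec
  have : Nonempty C := ⟨⟨_, hy⟩⟩
  have hinf : ‖x - hex.choose‖ = ⨅ w : C, ‖x - (w : Euc d)‖ :=
    le_antisymm (le_ciInf fun w => by simpa only [dist_eq_norm] using hmin w w.2)
      (ciInf_le hbdd ⟨_, hy⟩)
  exact ⟨hy, (norm_eq_iInf_iff_real_inner_le_zero hcv hy).mp hinf⟩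

theorem angDist_nonneg (C : Set (Euc d)) (x : Euc d) : 0 ≤ angDist C x := by
  unfold angDist
  split_ifs
  · positivity
  · exact Real.arccos_nonneg _

theorem angDist_le_pi_div_two (C : Set (Euc d)) (x : Euc d) : angDist C x ≤ Real.pi / 2 := by
  unfold angDist
  split_ifs
  · exact le_rfl
  · exact Real.arccos_le_pi_div_two.mpr (by positivity)

namespace IsClosedConvexCone

variable {C : Set (Euc d)}

theorem zero_mem (hC : IsClosedConvexCone C) : (0 : Euc d) ∈ C := by
  obtain ⟨c, hc⟩ := hC.1
  simpa using hC.2.2.2 c hc 0 le_rfl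

theorem metricProj_mem (hC : IsClosedConvexCone C) (x : Euc d) : metricProj C x ∈ C :=
  (metricProj_mem_and_inner_sub_le_zero hC.1 hC.2.1 hC.2.2.1 x).1

theorem inner_sub_metricProj_self (hC : IsClosedConvexCone C) (x : Euc d) :
    ⟪x - metricProj C x, metricProj C x⟫ = 0 := by
  obtain ⟨hp, hvar⟩ := metricProj_mem_and_inner_sub_le_zero hC.1 hC.2.1 hC.2.2.1 x
  have h2p := hvar _ (hC.2.2.2 _ hp 2 zero_le_two)
  have h0 := hvar 0 hC.zero_mem
  rw [two_smul, add_sub_cancel_right] at h2p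
  rw [zero_sub, inner_neg_right] at h0
  linarith

theorem inner_sub_metricProj_le_zero (hC : IsClosedConvexCone C) (x : Euc d) {w : Euc d}
    (hw : w ∈ C) : ⟪x - metricProj C x, w⟫ ≤ 0 := by
  have h := (metricProj_mem_and_inner_sub_le_zero hC.1 hC.2.1 hC.2.2.1 x).2 w hw
  rwa [inner_sub_right, hC.inner_sub_metricProj_self, sub_zero] at h

theorem norm_sq_eq_norm_metricProj_sq_add (hC : IsClosedConvexCone C) (x : Euc d) :
    ‖x‖ ^ 2 = ‖metricProj C x‖ ^ 2 + ‖x - metricProj C x‖ ^ 2 := by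
  have h := norm_add_sq_eq_norm_sq_add_norm_sq_real
    (real_inner_comm (metricProj C x) _ ▸ hC.inner_sub_metricProj_self x)
  rwa [add_sub_cancel, ← sq, ← sq, ← sq] at h

theorem norm_metricProj_le (hC : IsClosedConvexCone C) (x : Euc d) :
    ‖metricProj C x‖ ≤ ‖x‖ := by
  have := hC.norm_sq_eq_norm_metricProj_sq_add x
  nlinarith [norm_nonneg (x - metricProj C x), norm_nonneg x, norm_nonneg (metricProj C x)]

theorem inner_sub_metricProj_le_norm_mul_norm (hC : IsClosedConvexCone C) (x y : Euc d) :
    ⟪y, x - metricProj C x⟫ ≤ ‖y - metricProj C y‖ * ‖x - metricProj C x‖ := by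
  have hpolar : ⟪metricProj C y, x - metricProj C x⟫ ≤ 0 :=
    real_inner_comm (x - metricProj C x) _ ▸ hC.inner_sub_metricProj_le_zero x (hC.metricProj_mem y)
  have hcs := real_inner_le_norm (y - metricProj C y) (x - metricProj C x)
  rw [inner_sub_left] at hcs
  linarith

theorem norm_metricProj_eq_mul_cos (hC : IsClosedConvexCone C) (x : Euc d) :
    ‖metricProj C x‖ = ‖x‖ * Real.cos (angDist C x) := by
  by_cases hx : x = 0
  · simpa [hx] using hC.norm_metricProj_le 0
  have hxn : 0 < ‖x‖ := norm_pos_iff.mpr hx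
  have hratio : 0 ≤ ‖metricProj C x‖ / ‖x‖ := by positivity
  rw [angDist, if_neg hx, Real.cos_arccos (by linarith)
    ((div_le_one hxn).mpr (hC.norm_metricProj_le x)), mul_div_cancel₀ _ hxn.ne']

theorem norm_sub_metricProj_eq_mul_sin (hC : IsClosedConvexCone C) (x : Euc d) :
    ‖x - metricProj C x‖ = ‖x‖ * Real.sin (angDist C x) := by
  have hsin : 0 ≤ Real.sin (angDist C x) := Real.sin_nonneg_of_nonneg_of_le_pi
    (angDist_nonneg C x) (by linarith [angDist_le_pi_div_two C x, Real.pi_pos])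
  refine (pow_left_inj₀ (norm_nonneg _) (by positivity) two_ne_zero).mp ?_
  have hpyth := hC.norm_sq_eq_norm_metricProj_sq_add x
  rw [hC.norm_metricProj_eq_mul_cos] at hpyth
  linear_combination -hpyth - ‖x‖ ^ 2 * Real.sin_sq_add_cos_sq (angDist C x)

theorem norm_sub_metricProj_le_mul_tan (hC : IsClosedConvexCone C) {x : Euc d} {t : ℝ}
    (ht : angDist C x ≤ t) (htπ : t < Real.pi / 2) :
    ‖x - metricProj C x‖ ≤ ‖metricProj C x‖ * Real.tan t := by
  have hs0 := angDist_nonneg C x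
  have hcos : 0 < Real.cos (angDist C x) :=
    Real.cos_pos_of_mem_Ioo ⟨by linarith [Real.pi_pos], by linarith⟩
  have htan : Real.tan (angDist C x) ≤ Real.tan t :=
    Real.strictMonoOn_tan.monotoneOn ⟨by linarith [Real.pi_pos], by linarith⟩
      ⟨by linarith [Real.pi_pos], htπ⟩ ht
  calc ‖x - metricProj C x‖ = ‖x‖ * Real.cos (angDist C x) * Real.tan (angDist C x) := by
        rw [hC.norm_sub_metricProj_eq_mul_sin, Real.tan_eq_sin_div_cos]
        field_simp
    _ ≤ ‖metricProj C x‖ * Real.tan t := by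
        rw [hC.norm_metricProj_eq_mul_cos]
        gcongr

theorem metricProj_ne_zero (hC : IsClosedConvexCone C) {x : Euc d}
    (hx : angDist C x < Real.pi / 2) : metricProj C x ≠ 0 := by
  have hx0 : x ≠ 0 := by
    rintro rfl
    simp [angDist] at hx
  have hcos : 0 < Real.cos (angDist C x) :=
    Real.cos_pos_of_mem_Ioo ⟨by linarith [angDist_nonneg C x, Real.pi_pos], hx⟩
  rw [← norm_pos_iff, hC.norm_metricProj_eq_mul_cos]
  exact mul_pos (norm_pos_iff.mpr hx0) hcos

end IsClosedConvexCone

theorem angHaus_comm (C D : Set (Euc d)) : angHaus C D = angHaus D C := by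
  simp only [angHaus, and_comm (a := C ⊆ _)]

theorem pi_div_two_mem_angHaus_set (C D : Set (Euc d)) :
    Real.pi / 2 ∈ {l : ℝ | 0 ≤ l ∧ C ⊆ angParallel D l ∧ D ⊆ angParallel C l} :=
  ⟨by positivity, fun w _ => angDist_le_pi_div_two D w, fun w _ => angDist_le_pi_div_two C w⟩

theorem angHaus_nonneg (C D : Set (Euc d)) : 0 ≤ angHaus C D :=
  le_csInf ⟨_, pi_div_two_mem_angHaus_set C D⟩ fun _ hl => hl.1

theorem angDist_le_angHaus {C D : Set (Euc d)} {w : Euc d} (hw : w ∈ C) :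
    angDist D w ≤ angHaus C D :=
  le_csInf ⟨_, pi_div_two_mem_angHaus_set C D⟩ fun _ hl => hl.2.1 hw

theorem vecAngle_eq_angle {x y : Euc d} (hx : x ≠ 0) : vecAngle x y = angle x y := by
  by_cases hy : y = 0
  · simp [vecAngle, hx, hy]
  · rw [vecAngle, if_neg (by tauto), if_neg (by tauto), real_inner_smul_left,
      real_inner_smul_right, angle, ← mul_assoc, ← mul_inv, mul_comm, div_eq_mul_inv]

theorem norm_mul_norm_mul_le_inner_metricProj {C D : Set (Euc d)} (hC : IsClosedConvexCone C)
    (hD : IsClosedConvexCone D) {x : Euc d} {t : ℝ} (ht : angDist D x ≤ t)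
    (htπ : t < Real.pi / 2) (hle : ‖metricProj D x‖ ≤ ‖metricProj C x‖) :
    ‖metricProj C x‖ * ‖metricProj D x‖ * (1 - angHaus C D * Real.tan t) ≤
      ⟪metricProj C x, metricProj D x⟫ := by
  set p := metricProj C x
  set z := metricProj D x
  have htan : 0 ≤ Real.tan t := Real.tan_nonneg_of_nonneg_of_le_pi_div_two
    ((angDist_nonneg D x).trans ht) htπ.le
  have hxp : ⟪p, x⟫ = ‖p‖ ^ 2 := by
    have h := hC.inner_sub_metricProj_self x
    rw [inner_sub_left, sub_eq_zero, real_inner_comm] at h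
    rw [h, real_inner_self_eq_norm_sq]
  have hpq : ‖p - metricProj D p‖ ≤ ‖p‖ * angHaus C D := by
    rw [hD.norm_sub_metricProj_eq_mul_sin]
    gcongr
    exact (Real.sin_le (angDist_nonneg D p)).trans (angDist_le_angHaus (hC.metricProj_mem x))
  have hxz : ‖x - z‖ ≤ ‖z‖ * Real.tan t := hD.norm_sub_metricProj_le_mul_tan ht htπ
  calc ‖p‖ * ‖z‖ * (1 - angHaus C D * Real.tan t)
      ≤ ‖p‖ ^ 2 - (‖p‖ * angHaus C D) * (‖z‖ * Real.tan t) := by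
        nlinarith [mul_le_mul_of_nonneg_left hle (norm_nonneg p)]
    _ ≤ ‖p‖ ^ 2 - ‖p - metricProj D p‖ * ‖x - z‖ := by
        gcongr
        exact mul_nonneg (norm_nonneg p) (angHaus_nonneg C D)
    _ ≤ ⟪p, x⟫ - ⟪p, x - z⟫ := by
        rw [hxp]
        linarith [hD.inner_sub_metricProj_le_norm_mul_norm x p]
    _ = ⟪p, z⟫ := by rw [inner_sub_right]; ring

theorem one_sub_angHaus_mul_tan_le_cos_angle {C D : Set (Euc d)} (hC : IsClosedConvexCone C)
    (hD : IsClosedConvexCone D) {x : Euc d} {t : ℝ} (hCt : angDist C x ≤ t)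
    (hDt : angDist D x ≤ t) (htπ : t < Real.pi / 2) :
    1 - angHaus C D * Real.tan t ≤ Real.cos (angle (metricProj C x) (metricProj D x)) := by
  have hp := norm_pos_iff.mpr (hC.metricProj_ne_zero (hCt.trans_lt htπ))
  have hz := norm_pos_iff.mpr (hD.metricProj_ne_zero (hDt.trans_lt htπ))
  rw [cos_angle, le_div_iff₀ (mul_pos hp hz), mul_comm]
  rcases le_total ‖metricProj D x‖ ‖metricProj C x‖ with hle | hle
  · exact norm_mul_norm_mul_le_inner_metricProj hC hD hDt htπ hle
  · rw [mul_comm ‖metricProj C x‖, real_inner_comm, angHaus_comm]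
    exact norm_mul_norm_mul_le_inner_metricProj hD hC hCt htπ hle

theorem cos_vecAngle_metricProj_ge_general {d : ℕ} (C D : Set (Euc d))
    (hC : IsClosedConvexCone C)
    (hD : IsClosedConvexCone D) (x : Euc d)
    (ε : ℝ) (hε : 0 < ε)
    (h2 : angDist C x ≤ Real.pi / 2 - ε)
    (h3 : angDist D x ≤ Real.pi / 2 - ε) :
    1 - 2 * (Real.pi⁻¹ + Real.tan (Real.pi / 2 - ε)) * angHaus C D ≤
      Real.cos (vecAngle (metricProj C x) (metricProj D x)) := by
  have htπ : Real.pi / 2 - ε < Real.pi / 2 := by linarith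
  have htan : 0 ≤ Real.tan (Real.pi / 2 - ε) := Real.tan_nonneg_of_nonneg_of_le_pi_div_two
    ((angDist_nonneg C x).trans h2) htπ.le
  have hπ : 0 ≤ Real.pi⁻¹ := inv_nonneg.mpr Real.pi_pos.le
  rw [vecAngle_eq_angle (hC.metricProj_ne_zero (h2.trans_lt htπ))]
  refine le_trans ?_ (one_sub_angHaus_mul_tan_le_cos_angle hC hD h2 h3 htπ)
  nlinarith [angHaus_nonneg C D]

/-- If `δ_a(C,D) ≤ π/2 − ε`, `d_a(x,C) ≤ π/2 − ε` and
`d_a(x,D) ≤ π/2 − ε` for some `ε > 0`, then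
`cos d_a(Π_C x, Π_D x) ≥ 1 − c_ε δ_a(C,D)` with
`c_ε = 2 (π⁻¹ + tan(π/2 − ε))`. -/
theorem cos_vecAngle_metricProj_ge {d : ℕ} (hd : 2 ≤ d) (C D : Set (Euc d))
    (hC : IsClosedConvexCone C) (hCp : PosDim C)
    (hD : IsClosedConvexCone D) (hDp : PosDim D) (x : Euc d)
    (ε : ℝ) (hε : 0 < ε)
    (h1 : angHaus C D ≤ Real.pi / 2 - ε)
    (h2 : angDist C x ≤ Real.pi / 2 - ε)
    (h3 : angDist D x ≤ Real.pi / 2 - ε) :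
    1 - 2 * (Real.pi⁻¹ + Real.tan (Real.pi / 2 - ε)) * angHaus C D ≤
      Real.cos (vecAngle (metricProj C x) (metricProj D x)) :=
  cos_vecAngle_metricProj_ge_general C D hC hD x ε hε h2 h3
end
end

section
/- Let d ≥ 2. The d−1 functions g_1, …, g_{d−1} together with the constant function 1, where g_k(λ) = (ω_k ω_{d−k}/ω_d) ∫₀^λ cos^{k−1}φ sin^{d−k−1}φ dφ for 1 ≤ k ≤ d−1, are linearly independent as functions on the interval [0,1]: if c_0 + Σ_{k=1}^{d−1} c_k g_k(λ) = 0 for all λ ∈ [0,1], then c_0 = c_1 = … = c_{d−1} = 0. -/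
/-! Evaluating at `λ = 0` gives `c₀ = 0`. Differentiating, `Σ c_k a_k cos^{k-1} λ sin^{d-k-1} λ = 0`
on `(0, 1)` with `a_k = ω_k ω_{d-k} / ω_d > 0`. After division by `cos^{d-2} λ` this says that the
polynomial `Σ c_k a_k X^{d-k-1}` vanishes at every `tan λ`, i.e. at infinitely many points, so all
its coefficients vanish. -/

open Set MeasureTheory
open scoped RealInnerProductSpace ENNReal NNReal

attribute [local instance] Classical.propDecidable

noncomputable section

open Polynomial Real

lemma sphVol_pos {j : ℕ} (hj : 0 < j) : 0 < sphVol j := by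
  have := Gamma_pos_of_pos (show 0 < (j : ℝ) / 2 by positivity)
  unfold sphVol
  positivity

lemma sphVol_mul_sphVol_div_sphVol_pos {d k : ℕ} (hk : 0 < k) (hkd : k < d) :
    0 < sphVol k * sphVol (d - k) / sphVol d := by
  have := sphVol_pos hk
  have := sphVol_pos (Nat.sub_pos_of_lt hkd)
  have := sphVol_pos (hk.trans hkd)
  positivity

lemma gcoef_zero {d k : ℕ} (hk : k ≠ d) : gcoef d k 0 = 0 := by
  rw [gcoef, if_neg hk, intervalIntegral.integral_same, mul_zero]

lemma hasDerivAt_gcoef {d k : ℕ} (hk : k ≠ d) (x : ℝ) :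
    HasDerivAt (gcoef d k)
      (sphVol k * sphVol (d - k) / sphVol d * (cos x ^ (k - 1) * sin x ^ (d - k - 1))) x := by
  refine HasDerivAt.congr_of_eventuallyEq ?_ (.of_forall fun _ => if_neg hk)
  exact ((continuous_cos.pow _).mul (continuous_sin.pow _)).integral_hasStrictDerivAt 0 x
    |>.hasDerivAt.const_mul _

lemma eval_tan_mul_cos_pow (n : ℕ) (b : ℕ → ℝ) {x : ℝ} (hx : cos x ≠ 0) :
    (∑ i ∈ Finset.range (n + 1), C (b i) * X ^ (n - i)).eval (tan x) * cos x ^ n =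
      ∑ i ∈ Finset.range (n + 1), b i * (cos x ^ i * sin x ^ (n - i)) := by
  rw [eval_finsetSum, Finset.sum_mul]
  refine Finset.sum_congr rfl fun i hi => ?_
  have hsplit : cos x ^ n = cos x ^ i * cos x ^ (n - i) := by
    rw [← pow_add, Nat.add_sub_cancel' (Nat.lt_succ_iff.1 (Finset.mem_range.1 hi))]
  simp only [eval_mul, eval_C, eval_pow, eval_X]
  rw [tan_eq_sin_div_cos, div_pow, hsplit]
  field_simp

lemma coeff_sum_C_mul_X_pow_sub {n i : ℕ} (hi : i ≤ n) (b : ℕ → ℝ) :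
    (∑ j ∈ Finset.range (n + 1), C (b j) * X ^ (n - j)).coeff (n - i) = b i := by
  rw [finsetSum_coeff, Finset.sum_eq_single i]
  · simp
  · intro j hj hji
    rw [coeff_C_mul_X_pow, if_neg (by grind)]
  · intro hi'
    exact absurd (Finset.mem_range.2 (Nat.lt_succ_of_le hi)) hi'

theorem eq_zero_of_sum_cos_pow_mul_sin_pow_eq_zero {n : ℕ} {b : ℕ → ℝ} {s : Set ℝ}
    (hs : s.Infinite) (hs_sub : s ⊆ Ioo (-(π / 2)) (π / 2))
    (h : ∀ x ∈ s, ∑ i ∈ Finset.range (n + 1), b i * (cos x ^ i * sin x ^ (n - i)) = 0) :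
    ∀ i ≤ n, b i = 0 := by
  set p : ℝ[X] := ∑ i ∈ Finset.range (n + 1), C (b i) * X ^ (n - i)
  have hroot : ∀ x ∈ s, p.IsRoot (tan x) := fun x hx => by
    have hcos : cos x ≠ 0 := (cos_pos_of_mem_Ioo (hs_sub hx)).ne'
    have := eval_tan_mul_cos_pow n b hcos
    rw [h x hx] at this
    exact (mul_eq_zero.1 this).resolve_right (pow_ne_zero _ hcos)
  have hp : p = 0 :=
    p.eq_zero_of_infinite_isRoot <| ((hs.image (injOn_tan.mono hs_sub)).mono
      (Set.image_subset_iff.2 hroot))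
  intro i hi
  rw [← coeff_sum_C_mul_X_pow_sub hi b]
  simp [p, hp]

lemma sum_mul_deriv_gcoef_eq_zero {d : ℕ} {c : ℕ → ℝ}
    (h : ∀ l ∈ Icc (0:ℝ) 1, c 0 + ∑ k ∈ Finset.Icc 1 (d - 1), c k * gcoef d k l = 0)
    {x : ℝ} (hx : x ∈ Ioo (0:ℝ) 1) :
    ∑ k ∈ Finset.Icc 1 (d - 1), c k * (sphVol k * sphVol (d - k) / sphVol d *
      (cos x ^ (k - 1) * sin x ^ (d - k - 1))) = 0 := by
  have hF := (hasDerivAt_const x (c 0)).add <|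
    HasDerivAt.fun_sum (u := Finset.Icc 1 (d - 1)) fun k hk =>
      (hasDerivAt_gcoef (d := d) (k := k) (by grind) x).const_mul (c k)
  refine (zero_add _).symm.trans (hF.unique ((hasDerivAt_const x 0).congr_of_eventuallyEq ?_))
  filter_upwards [Ioo_mem_nhds hx.1 hx.2] with l hl using h l (Ioo_subset_Icc_self hl)

/-- The functions `1, g_1, …, g_{d−1}` are linearly
independent on `[0,1]`: if `c_0 + Σ_{k=1}^{d−1} c_k g_k(λ) = 0` for all
`λ ∈ [0,1]`, then `c_0 = c_1 = … = c_{d−1} = 0`. -/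
theorem gcoef_linearIndependent {d : ℕ} (hd : 2 ≤ d) (c : ℕ → ℝ)
    (h : ∀ l ∈ Set.Icc (0:ℝ) 1,
      c 0 + ∑ k ∈ Finset.Icc 1 (d - 1), c k * gcoef d k l = 0) :
    ∀ k ≤ d - 1, c k = 0 := by
  have hc0 : c 0 = 0 := by
    have hg0 : ∀ k ∈ Finset.Icc 1 (d - 1), c k * gcoef d k 0 = 0 := fun k hk => by
      rw [gcoef_zero (by grind), mul_zero]
    simpa [Finset.sum_eq_zero hg0] using h 0 ⟨le_rfl, zero_le_one⟩
  obtain ⟨n, rfl⟩ : ∃ n, d = n + 2 := ⟨d - 2, by omega⟩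
  have hcoef := eq_zero_of_sum_cos_pow_mul_sin_pow_eq_zero (n := n)
    (b := fun i => c (1 + i) * (sphVol (1 + i) * sphVol (n + 2 - (1 + i)) / sphVol (n + 2)))
    (Ioo_infinite zero_lt_one)
    (fun x hx => ⟨by linarith [hx.1, pi_pos], by linarith [hx.2, pi_gt_three]⟩) fun x hx => by
      rw [← sum_mul_deriv_gcoef_eq_zero h hx, show n + 2 - 1 = n + 1 from rfl,
        ← Finset.Ico_add_one_right_eq_Icc, Finset.sum_Ico_eq_sum_range]
      refine Finset.sum_congr rfl fun i _ => ?_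
      rw [show 1 + i - 1 = i by omega, show n + 2 - (1 + i) - 1 = n - i by omega, mul_assoc]
  rintro (_ | i) hi
  · exact hc0
  · rw [add_comm]
    exact (mul_eq_zero.1 (hcoef i (by omega))).resolve_right
      (sphVol_mul_sphVol_div_sphVol_pos (by omega) (by omega)).ne'
end
end
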